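/- arXiv:1503.03497 — 3 statements merged into one kernel-verified Lean document; each statement's English description precedes it below -/
import Mathlib

section
/- Let N = m+n with m even, and let X' be the real orthogonal matrix with entries X'_{jk} = (cos(2πjk/N) + sin(2πjk/N))/√N. Let Q be obtained from X' by permuting columns so that the last m columns of Q are columns 1,…,m/2 and the last m/2 columns of X'. Then for every row j, the sum of squares of the last m entries of row j of Q equals m/(m+n). -/
/-!
Column `k` and column `N - k` of row `j` of `X'` have angles `θ` and `2πj - θ`, so their squared
entries add up to `((cos θ + sin θ)² + (cos θ - sin θ)²) / N = 2 / N`. The last `m` columns of `Q`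
are columns `1, …, m/2` and `N - m/2, …, N - 1` of `X'`, which form `m/2` such pairs.
-/

open Real Finset

lemma cos_add_sin_sq_add_cos_sub_sin_sq (x : ℝ) :
    (cos x + sin x) ^ 2 + (cos x - sin x) ^ 2 = 2 := by
  nlinarith [sin_sq_add_cos_sq x]

noncomputable def hartleyEntry (N j k : ℕ) : ℝ :=
  (cos (2 * π * j * k / N) + sin (2 * π * j * k / N)) / √N

lemma hartleyEntry_sq_add_hartleyEntry_sub_sq {N k : ℕ} (hN : N ≠ 0) (hk : k ≤ N) (j : ℕ) :
    hartleyEntry N j k ^ 2 + hartleyEntry N j (N - k) ^ 2 = 2 / N := by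
  have hangle : 2 * π * j * ((N - k : ℕ) : ℝ) / N = j * (2 * π) - 2 * π * j * k / N := by
    rw [Nat.cast_sub hk]
    field_simp
  simp only [hartleyEntry, div_pow, sq_sqrt (Nat.cast_nonneg N), hangle,
    cos_nat_mul_two_pi_sub, sin_nat_mul_two_pi_sub, ← sub_eq_add_neg, ← add_div,
    cos_add_sin_sq_add_cos_sub_sin_sq]

lemma sum_fin_add_self_ite_eq_sum_pairs (g : ℕ → ℝ) (t n : ℕ) :
    ∑ i : Fin (t + t), g (if (i : ℕ) < t then i + 1 else n + i)
      = ∑ i : Fin t, (g (i + 1) + g (t + t + n - (i + 1))) := by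
  rw [Fin.sum_univ_add, sum_add_distrib]
  congr 1
  · simp
  · rw [← Equiv.sum_comp Fin.revPerm]
    refine sum_congr rfl fun i _ => ?_
    simp only [Fin.natAdd, Fin.revPerm_apply, Fin.val_rev]
    rw [if_neg (by omega)]
    congr 1
    omega

theorem permuted_dft_rows_last_m_entries (m n : ℕ) (hn : 0 < n)
    (hme : Even m)
    (X' : Matrix (Fin (m + n)) (Fin (m + n)) ℝ)
    (hX' : ∀ j k : Fin (m + n),
      X' j k = (Real.cos (2 * Real.pi * (j : ℕ) * (k : ℕ) / (m + n))
        + Real.sin (2 * Real.pi * (j : ℕ) * (k : ℕ) / (m + n))) / Real.sqrt (m + n))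
    (Q : Matrix (Fin (m + n)) (Fin (m + n)) ℝ)
    -- the last m columns of Q are columns 1,…,m/2 and the last m/2 columns of X'
    (hQ : ∀ (j : Fin (m + n)) (i : Fin m),
      Q j ⟨n + i, by omega⟩ =
        if (i : ℕ) < m / 2 then X' j ⟨(i : ℕ) + 1, by omega⟩
        else X' j ⟨n + i, by omega⟩) :
    ∀ j : Fin (m + n),
      ∑ i : Fin m, (Q j ⟨n + i, by omega⟩) ^ 2 = (m : ℝ) / (m + n) := by
  intro j
  obtain ⟨t, rfl⟩ := hme
  have hX : ∀ k, X' j k = hartleyEntry (t + t + n) j k := by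
    intro k
    rw [hX', hartleyEntry]
    push_cast
    rfl
  have hcol : ∀ i : Fin (t + t), Q j ⟨n + i, by omega⟩ ^ 2
      = hartleyEntry (t + t + n) j (if (i : ℕ) < t then i + 1 else n + i) ^ 2 := by
    intro i
    rw [hQ, show (t + t) / 2 = t by omega]
    split_ifs <;> rw [hX]
  have hpair : ∀ i : Fin t, hartleyEntry (t + t + n) j (i + 1) ^ 2
      + hartleyEntry (t + t + n) j (t + t + n - (i + 1)) ^ 2 = 2 / (t + t + n : ℕ) :=
    fun i => hartleyEntry_sq_add_hartleyEntry_sub_sq (by omega) (by omega) j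
  rw [sum_congr rfl fun i _ => hcol i, sum_fin_add_self_ite_eq_sum_pairs (fun k => hartleyEntry _ j k ^ 2),
    sum_congr rfl fun i _ => hpair i, sum_const, card_univ, Fintype.card_fin, nsmul_eq_mul]
  push_cast
  ring
end

section
/- Let H be a Hilbert space, P a bounded positive self-adjoint operator on H with ‖P‖ ≤ 1, whose kernel is infinite-dimensional, and suppose P has n orthonormal eigenvectors with eigenvalues in (1-σ, 1]. Let 0 < σ² ≤ ε < 1 and γ = (ε - σ²)/(1 - σ²). Then for every positive integer m with m ≤ nγ/(1-γ), there exist m+n orthonormal vectors Φ_1,…,Φ_{m+n} in H such that ‖PΦ_j - Φ_j‖² ≤ ε for all j. -/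
/-!
Since `ker P` is infinite-dimensional it contains `m` orthonormal vectors, and these are
orthogonal to the `φ k`, which lie in eigenspaces of the self-adjoint `P` for eigenvalues
`λ k > 1 - σ > 0`. On the resulting `m + n` orthonormal vectors `P - 1` is diagonal, with
squared defects `1` on the kernel vectors and `(1 - λ k)² < σ²` on the `φ k`. Mixing them by a
unitary matrix whose entries all have modulus `1 / √(m + n)` (the discrete Fourier transform)
spreads the defect evenly: every new vector has squared defect
`(m + ∑ (1 - λ k)²) / (m + n) ≤ (m + n σ²) / (m + n)`, which is `≤ ε` exactly when
`m (1 - ε) ≤ n (ε - σ²)`, i.e. `m ≤ n γ / (1 - γ)`.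
-/

open scoped ComplexConjugate

section Orthonormal

variable {𝕜 E : Type*} [RCLike 𝕜] [NormedAddCommGroup E] [InnerProductSpace 𝕜 E]

theorem exists_orthonormal_of_not_finiteDimensional (h : ¬ FiniteDimensional 𝕜 E) (m : ℕ) :
    ∃ v : Fin m → E, Orthonormal 𝕜 v := by
  have hrank : (m : Cardinal) ≤ Module.rank 𝕜 E := by
    by_contra! hlt
    exact h (Module.rank_lt_aleph0_iff.mp (hlt.trans Cardinal.natCast_lt_aleph0))
  obtain ⟨f, hf⟩ := exists_linearIndependent_of_le_rank hrank
  exact ⟨InnerProductSpace.gramSchmidtNormed 𝕜 f,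
    InnerProductSpace.gramSchmidtNormed_orthonormal hf⟩

theorem Orthonormal.sumElim {ι κ : Type*} {v : ι → E} {w : κ → E} (hv : Orthonormal 𝕜 v)
    (hw : Orthonormal 𝕜 w) (hvw : ∀ i j, inner 𝕜 (v i) (w j) = 0) :
    Orthonormal 𝕜 (Sum.elim v w) := by
  refine ⟨Sum.forall.2 ⟨hv.1, hw.1⟩, ?_⟩
  rintro (i | i) (j | j) hij
  · exact hv.2 fun h => hij (congrArg Sum.inl h)
  · exact hvw i j
  · exact inner_eq_zero_symm.1 (hvw j i)
  · exact hw.2 fun h => hij (congrArg Sum.inr h)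

variable {ι : Type*} [Fintype ι] {e : ι → E}

theorem Orthonormal.norm_sq_sum_smul (he : Orthonormal 𝕜 e) (a : ι → 𝕜) :
    ‖∑ k, a k • e k‖ ^ 2 = ∑ k, ‖a k‖ ^ 2 := by
  have h := he.inner_sum a a Finset.univ
  rw [inner_self_eq_norm_sq_to_K] at h
  simp only [RCLike.conj_mul] at h
  exact_mod_cast h

theorem Orthonormal.sum_smul_of_mem_unitaryGroup [DecidableEq ι] (he : Orthonormal 𝕜 e)
    {U : Matrix ι ι 𝕜} (hU : U ∈ Matrix.unitaryGroup ι 𝕜) :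
    Orthonormal 𝕜 fun j => ∑ k, U j k • e k := by
  rw [orthonormal_iff_ite]
  intro i j
  have := congrFun (congrFun (Matrix.mem_unitaryGroup_iff.1 hU) j) i
  rw [Matrix.mul_apply, Matrix.one_apply] at this
  simpa [he.inner_sum, mul_comm, eq_comm] using this

end Orthonormal

namespace ZMod

noncomputable def dftMatrix (N : ℕ) [NeZero N] : Matrix (ZMod N) (ZMod N) ℂ :=
  fun j k => ((√N)⁻¹ : ℂ) * stdAddChar (j * k)

variable {N : ℕ} [NeZero N]

theorem norm_dftMatrix_apply (j k : ZMod N) : ‖dftMatrix N j k‖ = (√N)⁻¹ := by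
  simp [dftMatrix]

theorem dftMatrix_mem_unitaryGroup : dftMatrix N ∈ Matrix.unitaryGroup (ZMod N) ℂ := by
  rw [Matrix.mem_unitaryGroup_iff]
  ext i j
  have hchar : ∀ k, stdAddChar (i * k) * conj (stdAddChar (j * k)) = stdAddChar (k * (i - j)) := by
    intro k
    rw [← AddChar.inv_apply_eq_conj, ← AddChar.map_neg_eq_inv, ← AddChar.map_add_eq_mul]
    ring_nf
  simp only [Matrix.mul_apply, Matrix.star_apply, dftMatrix, star_mul', RCLike.star_def, map_inv₀,
    Complex.conj_ofReal]
  have hsum : ∑ k, ((√N)⁻¹ : ℂ) * stdAddChar (i * k) * (((√N)⁻¹ : ℂ) * conj (stdAddChar (j * k)))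
      = (N : ℂ)⁻¹ * ∑ k, stdAddChar (k * (i - j)) := by
    rw [Finset.mul_sum]
    refine Finset.sum_congr rfl fun k _ => ?_
    have hN : ((√N : ℝ) : ℂ) ^ 2 = N := by
      rw [← Complex.ofReal_pow, Real.sq_sqrt (Nat.cast_nonneg N), Complex.ofReal_natCast]
    rw [← hchar, ← hN]
    ring
  rw [hsum, AddChar.sum_mulShift _ (isPrimitive_stdAddChar N), Matrix.one_apply, ZMod.card]
  split_ifs with h h'
  · exact inv_mul_cancel₀ (NeZero.ne _)
  · exact absurd (sub_eq_zero.1 h) h'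
  · exact absurd (sub_eq_zero.2 ‹_›) h
  · simp

end ZMod

theorem exists_mem_unitaryGroup_forall_norm_sq_eq (ι : Type*) [Fintype ι] [DecidableEq ι] :
    ∃ U ∈ Matrix.unitaryGroup ι ℂ, ∀ j k, ‖U j k‖ ^ 2 = (Fintype.card ι : ℝ)⁻¹ := by
  obtain hN | hN := (Fintype.card ι).eq_zero_or_pos
  · have : IsEmpty ι := Fintype.card_eq_zero_iff.1 hN
    exact ⟨1, one_mem _, isEmptyElim⟩
  have : NeZero (Fintype.card ι) := ⟨hN.ne'⟩
  let f : ι ≃ ZMod (Fintype.card ι) := (Fintype.equivFin ι).trans (ZMod.finEquiv _).toEquiv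
  refine ⟨(ZMod.dftMatrix _).submatrix f f, ?_, fun j k => ?_⟩
  · rw [Matrix.mem_unitaryGroup_iff, Matrix.star_eq_conjTranspose, Matrix.conjTranspose_submatrix,
      Matrix.submatrix_mul_equiv, ← Matrix.star_eq_conjTranspose,
      Matrix.mem_unitaryGroup_iff.1 ZMod.dftMatrix_mem_unitaryGroup, Matrix.submatrix_one_equiv]
  · rw [Matrix.submatrix_apply, ZMod.norm_dftMatrix_apply, inv_pow, Real.sq_sqrt (Nat.cast_nonneg _)]

section Mixing

variable {E ι : Type*} [NormedAddCommGroup E] [InnerProductSpace ℂ E] [Fintype ι] {e : ι → E}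

theorem Orthonormal.exists_orthonormal_norm_sq_apply_eq_average (he : Orthonormal ℂ e)
    (T : E →ₗ[ℂ] E) (c : ι → ℂ) (hT : ∀ k, T (e k) = c k • e k) :
    ∃ Φ : ι → E, Orthonormal ℂ Φ ∧
      ∀ j, ‖T (Φ j)‖ ^ 2 = (∑ k, ‖c k‖ ^ 2) / Fintype.card ι := by
  classical
  obtain ⟨U, hU, hUnorm⟩ := exists_mem_unitaryGroup_forall_norm_sq_eq ι
  refine ⟨fun j => ∑ k, U j k • e k, he.sum_smul_of_mem_unitaryGroup hU, fun j => ?_⟩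
  have hTΦ : T (∑ k, U j k • e k) = ∑ k, (U j k * c k) • e k := by
    simp only [map_sum, map_smul, hT, smul_smul]
  rw [hTΦ, he.norm_sq_sum_smul, Finset.sum_div]
  simp only [norm_mul, mul_pow, hUnorm, inv_mul_eq_div]

end Mixing

theorem add_mul_sq_le_add_mul_of_le_div_one_sub {m n σ ε : ℝ} (hσε : σ ^ 2 ≤ ε) (hε : ε < 1)
    (hmγ : m ≤ n * ((ε - σ ^ 2) / (1 - σ ^ 2)) / (1 - (ε - σ ^ 2) / (1 - σ ^ 2))) :
    m + n * σ ^ 2 ≤ (m + n) * ε := by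
  have hσ_sq : 0 < 1 - σ ^ 2 := by linarith
  have hγ : n * ((ε - σ ^ 2) / (1 - σ ^ 2)) / (1 - (ε - σ ^ 2) / (1 - σ ^ 2))
      = n * (ε - σ ^ 2) / (1 - ε) := by
    field_simp
    ring
  rw [hγ, le_div_iff₀ (by linarith)] at hmγ
  linarith

theorem exists_orthonormal_pseudoeigenfunctions_general
    {H : Type*} [NormedAddCommGroup H] [InnerProductSpace ℂ H] [CompleteSpace H]
    (P : H →L[ℂ] H) (hsa : IsSelfAdjoint P)
    (hker : ¬ FiniteDimensional ℂ (LinearMap.ker (P : H →ₗ[ℂ] H)))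
    (n : ℕ)
    (σ ε : ℝ) (hσε : σ ^ 2 ≤ ε) (hε : ε < 1)
    (φ : Fin n → H) (hφ : Orthonormal ℂ φ)
    (lam : Fin n → ℝ) (heig : ∀ k, P (φ k) = (lam k : ℂ) • φ k)
    (hlam : ∀ k, 1 - σ < lam k ∧ lam k ≤ 1)
    (m : ℕ)
    (hmγ : (m : ℝ) ≤ n * ((ε - σ ^ 2) / (1 - σ ^ 2))
        / (1 - (ε - σ ^ 2) / (1 - σ ^ 2))) :
    ∃ Φ : Fin (m + n) → H, Orthonormal ℂ Φ ∧
      ∀ j, ‖P (Φ j) - Φ j‖ ^ 2 ≤ ε := by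
  obtain ⟨ψ, hψ⟩ := exists_orthonormal_of_not_finiteDimensional hker m
  have hσ_lt_one : σ < 1 := by nlinarith
  have horth : ∀ a b, inner ℂ (ψ a : H) (φ b) = 0 := fun a b =>
    hsa.isSymmetric.orthogonalFamily_eigenspaces (i := 0) (j := (lam b : ℂ))
      (by exact_mod_cast (by linarith [(hlam b).1] : (0 : ℝ) ≠ lam b))
      ⟨ψ a, by rw [Module.End.eigenspace_zero]; exact (ψ a).2⟩
      ⟨φ b, Module.End.mem_eigenspace_iff.2 (heig b)⟩
  let e : Fin m ⊕ Fin n → H := Sum.elim (fun a => ψ a) φ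
  let μ : Fin m ⊕ Fin n → ℝ := Sum.elim 0 lam
  have he : Orthonormal ℂ e :=
    (hψ.comp_linearIsometry (LinearMap.ker _).subtypeₗᵢ).sumElim hφ horth
  have hT : ∀ k, ((P - 1 : H →L[ℂ] H) : H →ₗ[ℂ] H) (e k) = ((μ k - 1 : ℝ) : ℂ) • e k := by
    rintro (a | b)
    · simp [e, μ]
    · simp [e, μ, heig, sub_smul]
  obtain ⟨Φ, hΦ, hnorm⟩ := he.exists_orthonormal_norm_sq_apply_eq_average _ _ hT
  refine ⟨Φ ∘ finSumFinEquiv.symm, hΦ.comp _ finSumFinEquiv.symm.injective, fun j => ?_⟩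
  have hdefect : ∑ k, ‖((μ k - 1 : ℝ) : ℂ)‖ ^ 2 ≤ m + n * σ ^ 2 := by
    simp only [Complex.norm_real, Real.norm_eq_abs, sq_abs, Fintype.sum_sum_type, μ, Sum.elim_inl,
      Sum.elim_inr, Pi.zero_apply]
    have hlam_sq : ∀ b, (lam b - 1) ^ 2 ≤ σ ^ 2 := fun b => by nlinarith [hlam b]
    simpa using Finset.sum_le_sum fun b (_ : b ∈ Finset.univ) => hlam_sq b
  calc ‖P (Φ _) - Φ _‖ ^ 2 = _ := hnorm _
    _ ≤ ε := by
      rw [Fintype.card_sum, Fintype.card_fin, Fintype.card_fin]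
      exact div_le_of_le_mul₀ (by positivity) ((sq_nonneg σ).trans hσε) (hdefect.trans (by
        push_cast; linarith [add_mul_sq_le_add_mul_of_le_div_one_sub hσε hε hmγ]))

theorem exists_orthonormal_pseudoeigenfunctions
    {H : Type*} [NormedAddCommGroup H] [InnerProductSpace ℂ H] [CompleteSpace H]
    (P : H →L[ℂ] H) (hsa : IsSelfAdjoint P)
    (hpos : ∀ x : H, 0 ≤ (inner ℂ (P x) x : ℂ).re)
    (hnorm : ‖P‖ ≤ 1)
    (hker : ¬ FiniteDimensional ℂ (LinearMap.ker (P : H →ₗ[ℂ] H)))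
    (n : ℕ) (hn : 0 < n)
    (σ ε : ℝ) (hσ : 0 < σ) (hσε : σ ^ 2 ≤ ε) (hε : ε < 1)
    (φ : Fin n → H) (hφ : Orthonormal ℂ φ)
    (lam : Fin n → ℝ) (heig : ∀ k, P (φ k) = (lam k : ℂ) • φ k)
    (hlam : ∀ k, 1 - σ < lam k ∧ lam k ≤ 1)
    (m : ℕ) (hm : 0 < m)
    (hmγ : (m : ℝ) ≤ n * ((ε - σ ^ 2) / (1 - σ ^ 2))
        / (1 - (ε - σ ^ 2) / (1 - σ ^ 2))) :
    ∃ Φ : Fin (m + n) → H, Orthonormal ℂ Φ ∧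
      ∀ j, ‖P (Φ j) - Φ j‖ ^ 2 ≤ ε :=
  exists_orthonormal_pseudoeigenfunctions_general P hsa hker n σ ε hσε hε φ hφ lam heig hlam m hmγ
end

section
/- Let P be a compact self-adjoint positive operator on a Hilbert space with eigenvalues λ_0 ≥ λ_1 ≥ … (with multiplicity) satisfying ∑ λ_k = S and ∑ λ_k² = S - δ for some δ ≥ 0, and all λ_k ≤ 1. Then for any γ ∈ (0,1), the number M(γ) of eigenvalues ≥ γ satisfies M(γ) ≥ S - δ/(1-γ) and M(γ) ≤ S/γ. -/
theorem eigenvalue_counting_bounds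
    (lam : ℕ → ℝ) (hmono : Antitone lam)
    (hpos : ∀ k, 0 ≤ lam k) (hle1 : ∀ k, lam k ≤ 1)
    (S δ : ℝ) (hδ : 0 ≤ δ)
    (hsum : HasSum lam S)
    (hsq : HasSum (fun k => (lam k) ^ 2) (S - δ))
    (γ : ℝ) (hγ0 : 0 < γ) (hγ1 : γ < 1) :
    S - δ / (1 - γ) ≤ ({k | γ ≤ lam k}.ncard : ℝ) ∧
    ({k | γ ≤ lam k}.ncard : ℝ) ≤ S / γ := by
  have hsumm := hsum.summable
  have h0 : Filter.Tendsto lam Filter.atTop (nhds 0) := hsumm.tendsto_atTop_zero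
  have hev : ∀ᶠ k in Filter.atTop, lam k < γ := h0.eventually (gt_mem_nhds hγ0)
  obtain ⟨N, hN⟩ := Filter.eventually_atTop.mp hev
  have hfin : {k | γ ≤ lam k}.Finite := by
    apply Set.Finite.subset (Set.finite_Iio N)
    intro k hk
    by_contra hkN
    exact absurd hk (not_le.mpr (hN k (le_of_not_gt hkN)))
  set s := hfin.toFinset with hs
  have hmem : ∀ k, k ∈ s ↔ γ ≤ lam k := by
    intro k; simp [hs, Set.Finite.mem_toFinset]
  have hcard : ({k | γ ≤ lam k}.ncard : ℝ) = (s.card : ℝ) := by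
    rw [Set.ncard_eq_toFinset_card _ hfin]
  rw [hcard]
  have hγ1' : (0:ℝ) < 1 - γ := by linarith
  -- sum over s of lam ≤ S
  have hsum_s_le : ∑ k ∈ s, lam k ≤ S := by
    have := Summable.sum_le_tsum s (fun k _ => hpos k) hsumm
    rwa [hsum.tsum_eq] at this
  constructor
  · -- lower bound
    have hh : HasSum (fun k => lam k - lam k ^ 2) δ := by
      simpa using hsum.sub hsq
    have hhpos : ∀ k, 0 ≤ lam k - lam k ^ 2 := by
      intro k; nlinarith [hpos k, hle1 k]
    have hdecomp := Summable.sum_add_tsum_compl (s := s) hsumm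
    rw [hsum.tsum_eq] at hdecomp
    have hdecomp2 := Summable.sum_add_tsum_compl (s := s) hh.summable
    rw [hh.tsum_eq] at hdecomp2
    have hcompl_h : ∑' (k : ((↑s : Set ℕ)ᶜ : Set ℕ)), (lam k - lam (k:ℕ) ^ 2) ≤ δ := by
      have hnn : 0 ≤ ∑ k ∈ s, (lam k - lam k ^ 2) :=
        Finset.sum_nonneg fun k _ => hhpos k
      linarith [hdecomp2]
    have hcompl_lam : ∑' (k : ((↑s : Set ℕ)ᶜ : Set ℕ)), lam k ≤ δ / (1 - γ) := by
      rw [le_div_iff₀ hγ1']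
      have h1 : (∑' (k : ((↑s : Set ℕ)ᶜ : Set ℕ)), lam k) * (1 - γ)
          = ∑' (k : ((↑s : Set ℕ)ᶜ : Set ℕ)), lam k * (1 - γ) := by
        rw [tsum_mul_right]
      rw [h1]
      refine le_trans (Summable.tsum_le_tsum ?_ ?_ ?_) hcompl_h
      · rintro ⟨k, hk⟩
        have hklt : lam k < γ := by
          by_contra h
          exact hk (by simpa [hmem] using le_of_not_gt h)
        simp only
        nlinarith [hpos k]
      · exact (hsumm.subtype _).mul_right _
      · exact hh.summable.subtype _
    linarith [hdecomp, hsum_s_le,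
      show (∑ k ∈ s, lam k : ℝ) ≤ (s.card : ℝ) by
        calc ∑ k ∈ s, lam k ≤ ∑ k ∈ s, (1:ℝ) :=
              Finset.sum_le_sum fun k _ => hle1 k
          _ = (s.card : ℝ) := by simp]
  · -- upper bound
    rw [le_div_iff₀ hγ0]
    calc (s.card : ℝ) * γ = ∑ k ∈ s, γ := by simp [mul_comm]
      _ ≤ ∑ k ∈ s, lam k := Finset.sum_le_sum fun k hk => (hmem k).mp hk
      _ ≤ S := hsum_s_le
end
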